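/- arXiv:0707.0953 — 7 statements merged into one kernel-verified Lean document; each statement's English description precedes it below -/
import Mathlib

section
/- Every weighted lattice polynomial function p : L^n → L on a bounded distributive lattice L = [a,b] can be written in disjunctive normal form: there exists a set function α : 2^[n] → L such that p(x) = ⋁_{S ⊆ [n]} (α(S) ∧ ⋀_{i∈S} x_i). -/
/-!
Induction on the weighted lattice polynomial. Projections and constants have evident normal
forms, and the normal form of a join is the pointwise join of the weight functions. For a meet,
first replace each weight function `α` by its monotone hull `U ↦ ⋁_{S ⊆ U} α S`, which does not
change the function represented since `⋀_{i ∈ U} x_i ≤ ⋀_{i ∈ S} x_i` for `S ⊆ U`. For monotone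
weights `α`, `β` the meet of the two normal forms is the normal form of `α ∧ β`: the term for
`(S, T)` in the expanded meet is dominated by the term for `S ∪ T`.
-/

open Finset MeasureTheory ProbabilityTheory

/-- Weighted lattice polynomial functions on the interval L = [a,b] ⊆ ℝ:
built inductively from projections, constants in [a,b], pointwise min and max. -/
inductive IsWLP (a b : ℝ) (n : ℕ) : ((Fin n → ℝ) → ℝ) → Prop
  | proj (k : Fin n) : IsWLP a b n (fun x => x k)
  | const (c : ℝ) (hc : c ∈ Set.Icc a b) : IsWLP a b n (fun _ => c)
  | inf {p q} : IsWLP a b n p → IsWLP a b n q → IsWLP a b n (fun x => min (p x) (q x))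
  | sup {p q} : IsWLP a b n p → IsWLP a b n q → IsWLP a b n (fun x => max (p x) (q x))

/-- The characteristic vector e_S of S ⊆ [n] in {a,b}^n. -/
def charVec (a b : ℝ) {n : ℕ} (S : Finset (Fin n)) : Fin n → ℝ := fun i => if i ∈ S then b else a

section FoldMin

variable {ι L : Type*} [LinearOrder L] {b : L} {x : ι → L}

lemma Finset.fold_min_le_of_mem {S : Finset ι} {k : ι} (hk : k ∈ S) : S.fold min b x ≤ x k :=
  (fold_min_le _).mpr (Or.inr ⟨k, hk, le_rfl⟩)

lemma Finset.fold_min_le_init {S : Finset ι} : S.fold min b x ≤ b :=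
  (fold_min_le _).mpr (Or.inl le_rfl)

lemma Finset.fold_min_anti {S T : Finset ι} (hST : S ⊆ T) : T.fold min b x ≤ S.fold min b x :=
  (le_fold_min _).mpr ⟨fold_min_le_init, fun _ hi => fold_min_le_of_mem (hST hi)⟩

lemma Finset.fold_min_union [DecidableEq ι] {S T : Finset ι} :
    (S ∪ T).fold min b x = min (S.fold min b x) (T.fold min b x) := by
  refine le_antisymm (le_min (fold_min_anti subset_union_left) (fold_min_anti subset_union_right))
    ((le_fold_min _).mpr ⟨min_le_of_left_le fold_min_le_init, fun i hi => ?_⟩)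
  rcases mem_union.mp hi with h | h
  · exact min_le_of_left_le (fold_min_le_of_mem h)
  · exact min_le_of_right_le (fold_min_le_of_mem h)

end FoldMin

section DisjunctiveNormalForm

variable {ι L : Type*} [Fintype ι] [LinearOrder L] {b : L} {x : ι → L} {α β : Finset ι → L}

/-- `⋁_{S ⊆ ι} (α S ∧ ⋀_{i ∈ S} x i)`, with the top `b` of the interval as the empty meet. -/
def dnfEval (b : L) (α : Finset ι → L) (x : ι → L) : L :=
  (univ : Finset ι).powerset.sup' (powerset_nonempty _) fun S => min (α S) (S.fold min b x)

lemma le_dnfEval (S : Finset ι) : min (α S) (S.fold min b x) ≤ dnfEval b α x :=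
  le_sup' (fun S => min (α S) (S.fold min b x)) (mem_powerset.mpr (subset_univ S))

lemma dnfEval_le {c : L} (h : ∀ S, min (α S) (S.fold min b x) ≤ c) : dnfEval b α x ≤ c :=
  sup'_le _ _ fun S _ => h S

lemma dnfEval_mono (h : ∀ S, α S ≤ β S) : dnfEval b α x ≤ dnfEval b β x :=
  dnfEval_le fun S => (min_le_min_right _ (h S)).trans (le_dnfEval S)

lemma dnfEval_const {c : L} (hc : c ≤ b) : dnfEval b (fun _ => c) x = c := by
  refine le_antisymm (dnfEval_le fun _ => min_le_left _ _) ?_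
  simpa [min_eq_left hc] using le_dnfEval (b := b) (x := x) (α := fun _ => c) ∅

lemma dnfEval_proj [DecidableEq ι] {a : L} {k : ι} (hxk : x k ∈ Set.Icc a b) :
    dnfEval b (fun S => if k ∈ S then b else a) x = x k := by
  refine le_antisymm (dnfEval_le fun S => ?_) ?_
  · by_cases h : k ∈ S
    · simpa only [h, if_true] using min_le_of_right_le (fold_min_le_of_mem h)
    · simpa only [h, if_false] using min_le_of_left_le hxk.1
  · calc x k = min (if k ∈ ({k} : Finset ι) then b else a) (({k} : Finset ι).fold min b x) := by
          rw [if_pos (mem_singleton_self k), fold_singleton, min_eq_left hxk.2, min_eq_right hxk.2]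
      _ ≤ _ := le_dnfEval (α := fun S => if k ∈ S then b else a) {k}

lemma dnfEval_max : dnfEval b (fun S => max (α S) (β S)) x = max (dnfEval b α x) (dnfEval b β x) :=
  le_antisymm
    (dnfEval_le fun S => (min_max_distrib_right _ _ _).trans_le
      (max_le_max (le_dnfEval S) (le_dnfEval S)))
    (max_le (dnfEval_mono fun _ => le_max_left _ _) (dnfEval_mono fun _ => le_max_right _ _))

def monotoneHull (α : Finset ι → L) (U : Finset ι) : L :=
  U.powerset.sup' (powerset_nonempty _) α

omit [Fintype ι] in
lemma le_monotoneHull {S U : Finset ι} (hSU : S ⊆ U) : α S ≤ monotoneHull α U :=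
  le_sup' α (mem_powerset.mpr hSU)

omit [Fintype ι] in
lemma monotone_monotoneHull : Monotone (monotoneHull α) := fun _ _ hUV =>
  sup'_le _ _ fun _ hS => le_monotoneHull ((mem_powerset.mp hS).trans hUV)

omit [Fintype ι] in
lemma monotoneHull_mem_Icc {a : L} (hα : ∀ S, α S ∈ Set.Icc a b) (U : Finset ι) :
    monotoneHull α U ∈ Set.Icc a b :=
  ⟨(hα ∅).1.trans (le_monotoneHull (empty_subset U)), sup'_le _ _ fun S _ => (hα S).2⟩

lemma dnfEval_monotoneHull : dnfEval b (monotoneHull α) x = dnfEval b α x := by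
  refine le_antisymm (dnfEval_le fun U => ?_) (dnfEval_mono fun S => le_monotoneHull subset_rfl)
  obtain ⟨S, hS, hαS⟩ := exists_mem_eq_sup' (powerset_nonempty U) α
  calc min (monotoneHull α U) (U.fold min b x)
      ≤ min (α S) (S.fold min b x) :=
        min_le_min hαS.le (fold_min_anti (mem_powerset.mp hS))
    _ ≤ dnfEval b α x := le_dnfEval S

lemma dnfEval_min_of_monotone [DecidableEq ι] (hα : Monotone α) (hβ : Monotone β) :
    dnfEval b (fun S => min (α S) (β S)) x = min (dnfEval b α x) (dnfEval b β x) := by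
  refine le_antisymm
    (le_min (dnfEval_mono fun _ => min_le_left _ _) (dnfEval_mono fun _ => min_le_right _ _)) ?_
  obtain ⟨S, -, hS⟩ := exists_mem_eq_sup' (powerset_nonempty univ)
    fun S => min (α S) (S.fold min b x)
  obtain ⟨T, -, hT⟩ := exists_mem_eq_sup' (powerset_nonempty univ)
    fun T => min (β T) (T.fold min b x)
  rw [dnfEval, dnfEval, hS, hT]
  calc min (min (α S) (S.fold min b x)) (min (β T) (T.fold min b x))
      ≤ min (min (α (S ∪ T)) (β (S ∪ T))) ((S ∪ T).fold min b x) := by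
        rw [fold_min_union]
        have hαS := hα (subset_union_left : S ⊆ S ∪ T)
        have hβT := hβ (subset_union_right : T ⊆ S ∪ T)
        exact le_min (le_min (min_le_of_left_le (min_le_of_left_le hαS))
            (min_le_of_right_le (min_le_of_left_le hβT)))
          (min_le_min (min_le_right _ _) (min_le_right _ _))
    _ ≤ dnfEval b (fun S => min (α S) (β S)) x :=
        le_dnfEval (α := fun S => min (α S) (β S)) (S ∪ T)

end DisjunctiveNormalForm

/-- Disjunctive normal form of a weighted lattice polynomial function. -/
theorem wlp_disjunctive_form (a b : ℝ) (hab : a ≤ b) (n : ℕ)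
    (p : (Fin n → ℝ) → ℝ) (hp : IsWLP a b n p) :
    ∃ α : Finset (Fin n) → ℝ, (∀ S, α S ∈ Set.Icc a b) ∧
      ∀ x : Fin n → ℝ, (∀ i, x i ∈ Set.Icc a b) →
        p x = (Finset.univ (α := Fin n)).powerset.sup' (Finset.powerset_nonempty _)
          (fun S => min (α S) (S.fold min b x)) := by
  induction hp with
  | proj k =>
    refine ⟨fun S => if k ∈ S then b else a, fun S => ?_, fun x hx => (dnfEval_proj (hx k)).symm⟩
    dsimp only
    split_ifs
    exacts [⟨hab, le_rfl⟩, ⟨le_rfl, hab⟩]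
  | const c hc => exact ⟨fun _ => c, fun _ => hc, fun x _ => (dnfEval_const hc.2).symm⟩
  | @inf p q _ _ ihp ihq =>
    obtain ⟨α, hα, hpα⟩ := ihp
    obtain ⟨β, hβ, hqβ⟩ := ihq
    refine ⟨fun U => min (monotoneHull α U) (monotoneHull β U),
      fun U => ⟨le_min (monotoneHull_mem_Icc hα U).1 (monotoneHull_mem_Icc hβ U).1,
        min_le_of_left_le (monotoneHull_mem_Icc hα U).2⟩, fun x hx => ?_⟩
    change min (p x) (q x) = dnfEval b _ x
    rw [dnfEval_min_of_monotone monotone_monotoneHull monotone_monotoneHull,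
      dnfEval_monotoneHull, dnfEval_monotoneHull]
    exact congrArg₂ min (hpα x hx) (hqβ x hx)
  | @sup p q _ _ ihp ihq =>
    obtain ⟨α, hα, hpα⟩ := ihp
    obtain ⟨β, hβ, hqβ⟩ := ihq
    refine ⟨fun U => max (α U) (β U),
      fun U => ⟨le_max_of_le_left (hα U).1, max_le (hα U).2 (hβ U).2⟩, fun x hx => ?_⟩
    change max (p x) (q x) = dnfEval b _ x
    rw [dnfEval_max]
    exact congrArg₂ max (hpα x hx) (hqβ x hx)
end

section
/- Every weighted lattice polynomial function p : L^n → L can be written in conjunctive normal form: there exists a set function β : 2^[n] → L such that p(x) = ⋀_{S ⊆ [n]} (β(S) ∨ ⋁_{i∈S} x_i). -/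
open Finset MeasureTheory ProbabilityTheory

/-! Every weighted lattice polynomial function `p` is monotone, so `β S := p (e_{Sᶜ})` is
antitone in `S`. The identity `p x = ⋀_S (β S ∨ ⋁_{i ∈ S} x i)` then follows by induction on `p`:
it is checked directly for projections and constants, distributivity handles `∧`, and for `∨`
the clause of `S ∪ T` is dominated by the clauses of `S` and `T` because `β` is antitone. -/

lemma Finset.fold_max_union {ι α : Type*} [DecidableEq ι] [LinearOrder α] (a : α) (x : ι → α)
    (S T : Finset ι) :
    (S ∪ T).fold max a x = max (S.fold max a x) (T.fold max a x) := by
  refine le_antisymm ((fold_max_le _).mpr ⟨le_max_of_le_left ((le_fold_max _).mpr (.inl le_rfl)),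
    fun i hi => ?_⟩) (max_le ?_ ?_)
  · rcases mem_union.mp hi with h | h
    · exact le_max_of_le_left ((le_fold_max _).mpr (.inr ⟨i, h, le_rfl⟩))
    · exact le_max_of_le_right ((le_fold_max _).mpr (.inr ⟨i, h, le_rfl⟩))
  all_goals exact (fold_max_le _).mpr ⟨(le_fold_max _).mpr (.inl le_rfl),
    fun i hi => (le_fold_max _).mpr (.inr ⟨i, by simp [hi], le_rfl⟩)⟩

section ConjNF

variable {ι α : Type*} [Fintype ι] [LinearOrder α]

/-- The conjunctive normal form `⋀_S (β S ∨ ⋁_{i ∈ S} x i)`, the empty join being `a`. -/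
def conjNF (a : α) (β : Finset ι → α) (x : ι → α) : α :=
  (univ : Finset ι).powerset.inf' (powerset_nonempty _) fun S => max (β S) (S.fold max a x)

lemma le_conjNF_iff {a c : α} {β : Finset ι → α} {x : ι → α} :
    c ≤ conjNF a β x ↔ ∀ S : Finset ι, c ≤ max (β S) (S.fold max a x) := by
  simp [conjNF, le_inf'_iff]

lemma conjNF_le (a : α) (β : Finset ι → α) (x : ι → α) (S : Finset ι) :
    conjNF a β x ≤ max (β S) (S.fold max a x) :=
  inf'_le _ (mem_powerset.mpr (subset_univ S))

lemma conjNF_const {a c : α} (h : a ≤ c) (x : ι → α) : conjNF a (fun _ => c) x = c :=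
  le_antisymm ((conjNF_le a _ x ∅).trans (by simp [h]))
    (le_conjNF_iff.mpr fun _ => le_max_left _ _)

lemma conjNF_proj [DecidableEq ι] {a b : α} {x : ι → α} {k : ι} (hk : x k ∈ Set.Icc a b) :
    conjNF a (fun S => if k ∈ S then a else b) x = x k := by
  refine le_antisymm ?_ (le_conjNF_iff.mpr fun S => ?_)
  · simpa [hk.1] using conjNF_le a (fun S => if k ∈ S then a else b) x {k}
  · by_cases h : k ∈ S
    · exact le_max_of_le_right ((le_fold_max _).mpr (Or.inr ⟨k, h, le_rfl⟩))
    · simp [h, hk.2]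

lemma conjNF_min (a : α) (β₁ β₂ : Finset ι → α) (x : ι → α) :
    conjNF a (fun S => min (β₁ S) (β₂ S)) x = min (conjNF a β₁ x) (conjNF a β₂ x) := by
  refine le_antisymm (le_min ?_ ?_) (le_conjNF_iff.mpr fun S => ?_)
  · exact le_conjNF_iff.mpr fun S =>
      (conjNF_le a _ x S).trans (max_le_max_right _ (min_le_left _ _))
  · exact le_conjNF_iff.mpr fun S =>
      (conjNF_le a _ x S).trans (max_le_max_right _ (min_le_right _ _))
  · rw [max_min_distrib_right]
    exact min_le_min (conjNF_le a β₁ x S) (conjNF_le a β₂ x S)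

lemma conjNF_max [DecidableEq ι] {β₁ β₂ : Finset ι → α} (h₁ : Antitone β₁) (h₂ : Antitone β₂)
    (a : α) (x : ι → α) :
    conjNF a (fun S => max (β₁ S) (β₂ S)) x = max (conjNF a β₁ x) (conjNF a β₂ x) := by
  refine le_antisymm ?_ (le_conjNF_iff.mpr fun S => max_le ?_ ?_)
  · obtain ⟨S, -, hS⟩ := exists_mem_eq_inf' (powerset_nonempty (univ : Finset ι))
      fun S => max (β₁ S) (S.fold max a x)
    obtain ⟨T, -, hT⟩ := exists_mem_eq_inf' (powerset_nonempty (univ : Finset ι))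
      fun S => max (β₂ S) (S.fold max a x)
    calc conjNF a (fun S => max (β₁ S) (β₂ S)) x
        ≤ max (max (β₁ (S ∪ T)) (β₂ (S ∪ T))) ((S ∪ T).fold max a x) := conjNF_le a _ x _
      _ ≤ max (max (β₁ S) (S.fold max a x)) (max (β₂ T) (T.fold max a x)) := by
        rw [fold_max_union]
        have := h₁ (subset_union_left : S ⊆ S ∪ T)
        have := h₂ (subset_union_right : T ⊆ S ∪ T)
        grind
      _ = max (conjNF a β₁ x) (conjNF a β₂ x) := by rw [conjNF, conjNF, hS, hT]
  · exact (conjNF_le a β₁ x S).trans (max_le_max_right _ (le_max_left _ _))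
  · exact (conjNF_le a β₂ x S).trans (max_le_max_right _ (le_max_right _ _))

end ConjNF

section WLP

variable {a b : ℝ} {n : ℕ}

lemma charVec_mem (hab : a ≤ b) (S : Finset (Fin n)) (i : Fin n) :
    charVec a b S i ∈ Set.Icc a b := by
  unfold charVec; split <;> simp [hab]

lemma charVec_monotone (hab : a ≤ b) : Monotone (charVec a b (n := n)) := by
  intro U V h i
  unfold charVec
  split_ifs with hU hV hV
  exacts [le_rfl, absurd (h hU) hV, hab, le_rfl]

lemma charVec_compl_apply (S : Finset (Fin n)) (k : Fin n) :
    charVec a b Sᶜ k = if k ∈ S then a else b := by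
  by_cases h : k ∈ S <;> simp [charVec, h]

namespace IsWLP

lemma monotone {p : (Fin n → ℝ) → ℝ} (hp : IsWLP a b n p) : Monotone p := by
  induction hp with
  | proj k => exact fun x y h => h k
  | const c _ => exact monotone_const
  | inf _ _ ih₁ ih₂ => exact ih₁.min ih₂
  | sup _ _ ih₁ ih₂ => exact ih₁.max ih₂

lemma mem_Icc {p : (Fin n → ℝ) → ℝ} (hp : IsWLP a b n p) {x : Fin n → ℝ}
    (hx : ∀ i, x i ∈ Set.Icc a b) : p x ∈ Set.Icc a b := by
  induction hp with
  | proj k => exact hx k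
  | const c hc => exact hc
  | inf _ _ ih₁ ih₂ => exact ⟨le_min ih₁.1 ih₂.1, min_le_of_left_le ih₁.2⟩
  | sup _ _ ih₁ ih₂ => exact ⟨le_max_of_le_left ih₁.1, max_le ih₁.2 ih₂.2⟩

lemma antitone_charVec_compl (hab : a ≤ b) {p : (Fin n → ℝ) → ℝ} (hp : IsWLP a b n p) :
    Antitone fun S => p (charVec a b Sᶜ) :=
  hp.monotone.comp_antitone <|
    (charVec_monotone hab).comp_antitone (compl_antitone (α := Finset (Fin n)))

lemma eq_conjNF (hab : a ≤ b) {p : (Fin n → ℝ) → ℝ} (hp : IsWLP a b n p) {x : Fin n → ℝ}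
    (hx : ∀ i, x i ∈ Set.Icc a b) : p x = conjNF a (fun S => p (charVec a b Sᶜ)) x := by
  induction hp with
  | proj k => simp only [charVec_compl_apply]; exact (conjNF_proj (hx k)).symm
  | const c hc => exact (conjNF_const hc.1 x).symm
  | inf _ _ ih₁ ih₂ => rw [conjNF_min, ← ih₁, ← ih₂]
  | sup h₁ h₂ ih₁ ih₂ =>
    rw [conjNF_max (h₁.antitone_charVec_compl hab) (h₂.antitone_charVec_compl hab), ← ih₁, ← ih₂]

end IsWLP

end WLP

/-- Conjunctive normal form of a weighted lattice polynomial function. -/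
theorem wlp_conjunctive_form (a b : ℝ) (hab : a ≤ b) (n : ℕ)
    (p : (Fin n → ℝ) → ℝ) (hp : IsWLP a b n p) :
    ∃ β : Finset (Fin n) → ℝ, (∀ S, β S ∈ Set.Icc a b) ∧
      ∀ x : Fin n → ℝ, (∀ i, x i ∈ Set.Icc a b) →
        p x = (Finset.univ (α := Fin n)).powerset.inf' (Finset.powerset_nonempty _)
          (fun S => max (β S) (S.fold max a x)) :=
  ⟨fun S => p (charVec a b Sᶜ), fun S => hp.mem_Icc (charVec_mem hab Sᶜ),
    fun _ hx => hp.eq_conjNF hab hx⟩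
end

section
/- Let X_1,...,X_n be independent L-valued random variables, X_i with c.d.f. F_i, and let p : L^n → L be a weighted lattice polynomial function with Y_p := p(X_1,...,X_n). Then the c.d.f. of Y_p satisfies F_p(y) = 1 − Σ_{S ⊆ [n]} [1 − H_{p(e_S)}(y)] · Π_{i∈[n]∖S} F_i(y) · Π_{i∈S} [1 − F_i(y)], where H_c(y) = 1 if y ≥ c and 0 otherwise. -/
open Finset MeasureTheory ProbabilityTheory

noncomputable def exceedances {ι : Type*} [Fintype ι] (y : ℝ) (x : ι → ℝ) : Finset ι :=
  univ.filter fun i => y < x i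

lemma exceedances_eq_iff {ι : Type*} [Fintype ι] [DecidableEq ι] {y : ℝ} {x : ι → ℝ}
    {S : Finset ι} :
    exceedances y x = S ↔ ∀ i, x i ∈ if i ∈ S then Set.Ioi y else Set.Iic y := by
  simp only [exceedances, Finset.ext_iff, mem_filter, mem_univ, true_and]
  refine forall_congr' fun i => ?_
  split_ifs with hi <;> simp [hi]

lemma IsWLP.le_iff_charVec_exceedances {a b : ℝ} {n : ℕ} {p : (Fin n → ℝ) → ℝ}
    (hp : IsWLP a b n p) (y : ℝ) {x : Fin n → ℝ} (hx : ∀ i, x i ∈ Set.Icc a b) :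
    p x ≤ y ↔ p (charVec a b (exceedances y x)) ≤ y := by
  induction hp with
  | proj k =>
    by_cases hk : y < x k
    · simp [charVec, exceedances, hk, hk.trans_le (hx k).2, hk.not_ge]
    · simp [charVec, exceedances, hk, not_lt.1 hk, (hx k).1.trans (not_lt.1 hk)]
  | const => rfl
  | inf _ _ ihp ihq => simp only [min_le_iff, ihp, ihq]
  | sup _ _ ihp ihq => simp only [max_le_iff, ihp, ihq]

section Independence

variable {Ω ι : Type*} [Fintype ι] [DecidableEq ι] {X : ι → Ω → ℝ}

lemma setOf_exceedances_eq (y : ℝ) (S : Finset ι) :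
    {ω | exceedances y (X · ω) = S} =
      ⋂ i, X i ⁻¹' (if i ∈ S then Set.Ioi y else Set.Iic y) := by
  ext ω
  simp [exceedances_eq_iff]

variable [MeasurableSpace Ω]

lemma measurableSet_exceedances_eq (hX : ∀ i, Measurable (X i)) (y : ℝ) (S : Finset ι) :
    MeasurableSet {ω | exceedances y (X · ω) = S} := by
  rw [setOf_exceedances_eq]
  refine .iInter fun i => hX i ?_
  split_ifs
  exacts [measurableSet_Ioi, measurableSet_Iic]

lemma measureReal_exceedances_eq {μ : Measure Ω} [IsProbabilityMeasure μ]
    (hX : ∀ i, Measurable (X i)) (hind : iIndepFun X μ) (y : ℝ) (S : Finset ι) :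
    μ.real {ω | exceedances y (X · ω) = S} =
      (∏ i ∈ Sᶜ, μ.real {ω | X i ω ≤ y}) * ∏ i ∈ S, (1 - μ.real {ω | X i ω ≤ y}) := by
  have hfactor : ∀ i, μ.real (X i ⁻¹' (if i ∈ S then Set.Ioi y else Set.Iic y)) =
      if i ∈ S then 1 - μ.real {ω | X i ω ≤ y} else μ.real {ω | X i ω ≤ y} := by
    intro i
    split_ifs
    · rw [← Set.compl_Iic, Set.preimage_compl, probReal_compl_eq_one_sub (hX i measurableSet_Iic)]
      rfl
    · rfl
  rw [setOf_exceedances_eq, measureReal_def, hind.meas_iInter, ENNReal.toReal_prod]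
  · simp only [← measureReal_def, hfactor, prod_ite, filter_mem_eq_inter, univ_inter,
      filter_not, ← compl_eq_univ_sdiff, mul_comm]
  · intro i
    exact ⟨_, by split_ifs; exacts [measurableSet_Ioi, measurableSet_Iic], rfl⟩

end Independence

theorem cdf_wlp_disjunctive_general {Ω : Type*} [MeasurableSpace Ω] (μ : Measure Ω)
    [IsProbabilityMeasure μ] (a b : ℝ) (n : ℕ)
    (X : Fin n → Ω → ℝ) (hX : ∀ i, Measurable (X i))
    (hrange : ∀ i ω, X i ω ∈ Set.Icc a b)
    (hind : iIndepFun X μ)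
    (p : (Fin n → ℝ) → ℝ) (hp : IsWLP a b n p) (y : ℝ) :
    (μ {ω | p (fun i => X i ω) ≤ y}).toReal =
      1 - ∑ S ∈ (Finset.univ (α := Fin n)).powerset,
        (1 - (if p (charVec a b S) ≤ y then (1 : ℝ) else 0)) *
          ((∏ i ∈ Sᶜ, (μ {ω | X i ω ≤ y}).toReal) *
            ∏ i ∈ S, (1 - (μ {ω | X i ω ≤ y}).toReal)) := by
  let E : Ω → Finset (Fin n) := fun ω => exceedances y (X · ω)
  let T := (univ : Finset (Fin n)).powerset.filter fun S => ¬ p (charVec a b S) ≤ y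
  have hcompl : {ω | p (fun i => X i ω) ≤ y}ᶜ = E ⁻¹' T := by
    ext ω
    simp [E, T, hp.le_iff_charVec_exceedances y (hrange · ω)]
  have hmeas : MeasurableSet {ω | p (fun i => X i ω) ≤ y} := by
    rw [← compl_compl {ω | _}, hcompl, ← Finset.set_biUnion_preimage_singleton]
    exact .compl (.biUnion T.countable_toSet fun S _ => measurableSet_exceedances_eq hX y S)
  rw [← measureReal_def, eq_sub_iff_add_eq, ← eq_sub_iff_add_eq',
    ← probReal_compl_eq_one_sub hmeas, hcompl,
    ← sum_measureReal_preimage_singleton T fun S _ => measurableSet_exceedances_eq hX y S]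
  simp only [T, sum_filter, ← measureReal_def]
  refine sum_congr rfl fun S _ => ?_
  split_ifs <;> simp [Set.preimage, measureReal_exceedances_eq hX hind]

/-- C.d.f. of Y_p = p(X_1,...,X_n), disjunctive (product) form:
F_p(y) = 1 − Σ_{S⊆[n]} [1 − H_{p(e_S)}(y)] Π_{i∉S} F_i(y) Π_{i∈S} [1 − F_i(y)]. -/
theorem cdf_wlp_disjunctive {Ω : Type*} [MeasurableSpace Ω] (μ : Measure Ω)
    [IsProbabilityMeasure μ] (a b : ℝ) (hab : a ≤ b) (n : ℕ)
    (X : Fin n → Ω → ℝ) (hX : ∀ i, Measurable (X i))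
    (hrange : ∀ i ω, X i ω ∈ Set.Icc a b)
    (hind : iIndepFun X μ)
    (p : (Fin n → ℝ) → ℝ) (hp : IsWLP a b n p) (y : ℝ) :
    (μ {ω | p (fun i => X i ω) ≤ y}).toReal =
      1 - ∑ S ∈ (Finset.univ (α := Fin n)).powerset,
        (1 - (if p (charVec a b S) ≤ y then (1 : ℝ) else 0)) *
          ((∏ i ∈ Sᶜ, (μ {ω | X i ω ≤ y}).toReal) *
            ∏ i ∈ S, (1 - (μ {ω | X i ω ≤ y}).toReal)) :=
  cdf_wlp_disjunctive_general μ a b n X hX hrange hind p hp y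
end

section
/- With the same setup, the c.d.f. of Y_p also satisfies F_p(y) = Σ_{S ⊆ [n]} H_{p(e_{[n]∖S})}(y) · Π_{i∈S} F_i(y) · Π_{i∈[n]∖S} [1 − F_i(y)]. -/
open Finset MeasureTheory ProbabilityTheory

/-
Whether `p x ≤ y` holds depends only on the set `S` of coordinates with `x i ≤ y`: replacing
those coordinates by `a` and the others by `b`, i.e. passing to `e_{[n]∖S}`, does not change the
answer. So the event `Y_p ≤ y` is the disjoint union, over the `S` with `p(e_{[n]∖S}) ≤ y`, of the
events "`X_i ≤ y` exactly for `i ∈ S`", each of probability `Π_{i∈S} F_i(y) Π_{i∉S} (1 - F_i(y))`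
by independence.
-/

lemma IsWLP.le_iff_charVec_compl {a b : ℝ} {n : ℕ} {p : (Fin n → ℝ) → ℝ} (hp : IsWLP a b n p)
    {x : Fin n → ℝ} (hx : ∀ i, x i ∈ Set.Icc a b) (y : ℝ) :
    p x ≤ y ↔ p (charVec a b (univ.filter fun i => x i ≤ y)ᶜ) ≤ y := by
  induction hp with
  | proj k =>
    by_cases hk : x k ≤ y <;>
      simp only [charVec, mem_compl, mem_filter, mem_univ, true_and, hk, not_true,
        not_false_eq_true, if_true, if_false]
    · simpa using (hx k).1.trans hk
    · simpa using fun hb => hk ((hx k).2.trans hb)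
  | const _ _ => rfl
  | inf _ _ ihp ihq => simp only [min_le_iff, ihp, ihq]
  | sup _ _ ihp ihq => simp only [max_le_iff, ihp, ihq]

section HitIndices

variable {Ω ι : Type*} [Fintype ι] {β : ι → Type*} {X : ∀ i, Ω → β i} {A : ∀ i, Set (β i)}

open Classical in
noncomputable def hitIndices (X : ∀ i, Ω → β i) (A : ∀ i, Set (β i)) (ω : Ω) : Finset ι :=
  univ.filter fun i => X i ω ∈ A i

lemma hitIndices_preimage_singleton [DecidableEq ι] (S : Finset ι) :
    hitIndices X A ⁻¹' {S} = ⋂ i, X i ⁻¹' (if i ∈ S then A i else (A i)ᶜ) := by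
  ext ω
  simp only [Set.mem_preimage, Set.mem_singleton_iff, Set.mem_iInter, hitIndices,
    Finset.ext_iff, mem_filter, mem_univ, true_and]
  refine forall_congr' fun i => ?_
  by_cases hi : i ∈ S <;> simp [hi]

variable [DecidableEq ι] [MeasurableSpace Ω] [∀ i, MeasurableSpace (β i)] {μ : Measure Ω}

lemma measurableSet_hitIndices_preimage_singleton (hX : ∀ i, Measurable (X i))
    (hA : ∀ i, MeasurableSet (A i)) (S : Finset ι) :
    MeasurableSet (hitIndices X A ⁻¹' {S}) := by
  rw [hitIndices_preimage_singleton]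
  refine .iInter fun i => hX i ?_
  split_ifs
  exacts [hA i, (hA i).compl]

lemma measure_hitIndices_eq (hind : iIndepFun X μ) (hA : ∀ i, MeasurableSet (A i))
    (S : Finset ι) :
    μ (hitIndices X A ⁻¹' {S}) =
      (∏ i ∈ S, μ (X i ⁻¹' A i)) * ∏ i ∈ Sᶜ, μ (X i ⁻¹' (A i)ᶜ) := by
  have hsets (i : ι) : MeasurableSet (if i ∈ S then A i else (A i)ᶜ) := by
    split_ifs
    exacts [hA i, (hA i).compl]
  have hprod := hind.measure_inter_preimage_eq_mul univ fun i _ => hsets i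
  simp only [mem_univ, Set.iInter_true] at hprod
  rw [hitIndices_preimage_singleton, hprod, ← prod_mul_prod_compl S]
  congr 1 <;> refine prod_congr rfl fun i hi => ?_
  · rw [if_pos hi]
  · rw [if_neg (mem_compl.mp hi)]

lemma measureReal_hitIndices_mem [IsProbabilityMeasure μ] (hX : ∀ i, Measurable (X i))
    (hind : iIndepFun X μ) (hA : ∀ i, MeasurableSet (A i)) (T : Finset (Finset ι)) :
    μ.real (hitIndices X A ⁻¹' T) =
      ∑ S ∈ T, (∏ i ∈ S, μ.real (X i ⁻¹' A i)) * ∏ i ∈ Sᶜ, (1 - μ.real (X i ⁻¹' A i)) := by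
  rw [← sum_measureReal_preimage_singleton T
    fun S _ => measurableSet_hitIndices_preimage_singleton hX hA S]
  refine sum_congr rfl fun S _ => ?_
  rw [measureReal_def, measure_hitIndices_eq hind hA, ENNReal.toReal_mul, ENNReal.toReal_prod,
    ENNReal.toReal_prod]
  congr 1
  refine prod_congr rfl fun i _ => ?_
  rw [Set.preimage_compl, ← measureReal_def, probReal_compl_eq_one_sub (hX i (hA i))]

end HitIndices

theorem cdf_wlp_conjunctive_general {Ω : Type*} [MeasurableSpace Ω] (μ : Measure Ω)
    [IsProbabilityMeasure μ] (a b : ℝ) (n : ℕ)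
    (X : Fin n → Ω → ℝ) (hX : ∀ i, Measurable (X i))
    (hrange : ∀ i ω, X i ω ∈ Set.Icc a b)
    (hind : iIndepFun X μ)
    (p : (Fin n → ℝ) → ℝ) (hp : IsWLP a b n p) (y : ℝ) :
    (μ {ω | p (fun i => X i ω) ≤ y}).toReal =
      ∑ S ∈ (Finset.univ (α := Fin n)).powerset,
        (if p (charVec a b Sᶜ) ≤ y then (1 : ℝ) else 0) *
          ((∏ i ∈ S, (μ {ω | X i ω ≤ y}).toReal) *
            ∏ i ∈ Sᶜ, (1 - (μ {ω | X i ω ≤ y}).toReal)) := by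
  have hevent : {ω | p (fun i => X i ω) ≤ y} = hitIndices X (fun _ => Set.Iic y) ⁻¹'
      ↑(univ.powerset.filter fun S => p (charVec a b Sᶜ) ≤ y) := by
    ext ω
    simp [hitIndices, hp.le_iff_charVec_compl fun i => hrange i ω]
  simp_rw [boole_mul, ← sum_filter, ← measureReal_def, hevent]
  exact measureReal_hitIndices_mem hX hind (fun _ => measurableSet_Iic) _

/-- C.d.f. of Y_p, conjunctive (product) form:
F_p(y) = Σ_{S⊆[n]} H_{p(e_{[n]∖S})}(y) Π_{i∈S} F_i(y) Π_{i∉S} [1 − F_i(y)]. -/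
theorem cdf_wlp_conjunctive {Ω : Type*} [MeasurableSpace Ω] (μ : Measure Ω)
    [IsProbabilityMeasure μ] (a b : ℝ) (hab : a ≤ b) (n : ℕ)
    (X : Fin n → Ω → ℝ) (hX : ∀ i, Measurable (X i))
    (hrange : ∀ i ω, X i ω ∈ Set.Icc a b)
    (hind : iIndepFun X μ)
    (p : (Fin n → ℝ) → ℝ) (hp : IsWLP a b n p) (y : ℝ) :
    (μ {ω | p (fun i => X i ω) ≤ y}).toReal =
      ∑ S ∈ (Finset.univ (α := Fin n)).powerset,
        (if p (charVec a b Sᶜ) ≤ y then (1 : ℝ) else 0) *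
          ((∏ i ∈ S, (μ {ω | X i ω ≤ y}).toReal) *
            ∏ i ∈ Sᶜ, (1 - (μ {ω | X i ω ≤ y}).toReal)) :=
  cdf_wlp_conjunctive_general μ a b n X hX hrange hind p hp y
end

section
/- The c.d.f. of Y_p can be written via the Möbius transform: F_p(y) = 1 − Σ_{S ⊆ [n]} m_{v_{p,y}}(S) Π_{i∈S} [1 − F_i(y)], where v_{p,y}(S) := 1 − H_{p(e_S)}(y) and m denotes the Möbius transform. -/
open Finset MeasureTheory ProbabilityTheory

/-!
For `x ∈ [a,b]^n`, whether `p x` exceeds `y` depends only on the set `S(x) = {i | y < x i}`: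
`y < p x ↔ y < p (e_{S(x)})`, because thresholding at `y` commutes with `min`, `max`, projections
and constants. Hence `1[y < p(X)] = v(S(X))` with `v(T) = 1[y < p(e_T)]`, and Möbius inversion
rewrites this as `∑_S m_v(S) ∏_{i ∈ S} 1[y < X_i]`. Taking expectations and using independence
turns each product of indicators into `∏_{i ∈ S} (1 - F_i(y))` (Owen's multilinear extension).
-/

section Moebius

variable {α R : Type*} [DecidableEq α] [CommRing R]

def moebiusTransform (f : Finset α → R) (S : Finset α) : R :=
  ∑ T ∈ S.powerset, (-1) ^ (#S - #T) * f T

theorem sum_Icc_neg_one_pow_card_sub {T A : Finset α} (hTA : T ⊆ A) :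
    ∑ S ∈ Icc T A, (-1 : R) ^ (#S - #T) = if T = A then 1 else 0 := by
  rw [Icc_eq_image_powerset hTA, sum_image fun U hU V hV hUV => ?_]
  · have hcard : ∀ U ∈ (A \ T).powerset, #(T ∪ U) - #T = #U := fun U hU => by
      rw [card_union_of_disjoint (disjoint_sdiff.mono_right (mem_powerset.1 hU)),
        Nat.add_sub_cancel_left]
    rw [sum_congr rfl fun U hU => by rw [hcard U hU]]
    have := congrArg (Int.cast : ℤ → R) (sum_powerset_neg_one_pow_card (x := A \ T))
    push_cast at this
    rw [this]
    exact if_congr (sdiff_eq_empty_iff_subset.trans ⟨hTA.antisymm, fun h => h.ge⟩) rfl rfl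
  · have hU := disjoint_sdiff.mono_right (mem_powerset.1 hU)
    have hV := disjoint_sdiff.mono_right (mem_powerset.1 hV)
    rw [← union_sdiff_cancel_left hU, ← union_sdiff_cancel_left hV]
    exact congrArg (· \ T) hUV

theorem sum_powerset_moebiusTransform (f : Finset α → R) (A : Finset α) :
    ∑ S ∈ A.powerset, moebiusTransform f S = f A := by
  unfold moebiusTransform
  rw [sum_comm' (t' := A.powerset) (s' := fun T => Icc T A) fun S T => by
    simp only [mem_powerset, mem_Icc]
    exact ⟨fun ⟨hS, hT⟩ => ⟨⟨hT, hS⟩, hT.trans hS⟩, fun ⟨⟨hT, hS⟩, _⟩ => ⟨hS, hT⟩⟩]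
  simp_rw [← sum_mul]
  rw [sum_congr rfl fun T hT => by rw [sum_Icc_neg_one_pow_card_sub (mem_powerset.1 hT)]]
  simp [ite_mul]

end Moebius

theorem IsWLP.measurable {a b : ℝ} {n : ℕ} {p : (Fin n → ℝ) → ℝ} (hp : IsWLP a b n p) :
    Measurable p := by
  induction hp with
  | proj k => exact measurable_pi_apply k
  | const c _ => exact measurable_const
  | inf _ _ ihp ihq => exact ihp.min ihq
  | sup _ _ ihp ihq => exact ihp.max ihq

theorem IsWLP.lt_iff_lt_charVec {a b : ℝ} {n : ℕ} {p : (Fin n → ℝ) → ℝ} (hp : IsWLP a b n p)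
    {x : Fin n → ℝ} (hx : ∀ i, x i ∈ Set.Icc a b) {y : ℝ} {S : Finset (Fin n)}
    (hS : ∀ i, i ∈ S ↔ y < x i) :
    y < p x ↔ y < p (charVec a b S) := by
  induction hp with
  | proj k =>
    simp only [charVec]
    by_cases hk : y < x k
    · simp only [(hS k).2 hk, if_true, hk, true_iff]
      exact hk.trans_le (hx k).2
    · simp only [mt (hS k).1 hk, if_false, hk, false_iff, not_lt]
      exact (hx k).1.trans (not_lt.1 hk)
  | const => rfl
  | inf _ _ ihp ihq => simp only [lt_min_iff, ihp, ihq]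
  | sup _ _ ihp ihq => simp only [lt_max_iff, ihp, ihq]

open Classical in
theorem integral_eq_sum_moebiusTransform_mul_prod {Ω ι : Type*} [MeasurableSpace Ω]
    [Fintype ι] {μ : Measure Ω} {E : ι → Set Ω} (hE : ∀ i, MeasurableSet (E i))
    (hind : iIndepSet E μ) (g : Finset ι → ℝ) :
    ∫ ω, g (univ.filter (ω ∈ E ·)) ∂μ =
      ∑ S ∈ univ.powerset, moebiusTransform g S * ∏ i ∈ S, μ.real (E i) := by
  have := hind.isProbabilityMeasure
  have hmeas (S : Finset ι) : MeasurableSet (⋂ i ∈ S, E i) :=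
    .biInter S.countable_toSet fun i _ => hE i
  have hexpand (ω : Ω) : g (univ.filter (ω ∈ E ·)) =
      ∑ S ∈ univ.powerset, moebiusTransform g S * (⋂ i ∈ S, E i).indicator 1 ω := by
    simp only [Set.indicator_apply, Set.mem_iInter, Pi.one_apply, mul_ite, mul_one, mul_zero,
      ← sum_filter]
    rw [← sum_powerset_moebiusTransform g]
    congr 1
    ext S
    simp [subset_iff]
  simp_rw [hexpand]
  rw [integral_finsetSum _ fun S _ => ((integrable_const 1).indicator (hmeas S)).const_mul _]
  refine sum_congr rfl fun S _ => ?_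
  rw [integral_const_mul, integral_indicator_one (hmeas S), measureReal_def,
    hind.meas_biInter, ENNReal.toReal_prod]
  rfl

theorem cdf_wlp_moebius_general {Ω : Type*} [MeasurableSpace Ω] (μ : Measure Ω)
    [IsProbabilityMeasure μ] (a b : ℝ) (n : ℕ)
    (X : Fin n → Ω → ℝ) (hX : ∀ i, Measurable (X i))
    (hrange : ∀ i ω, X i ω ∈ Set.Icc a b)
    (hind : iIndepFun X μ)
    (p : (Fin n → ℝ) → ℝ) (hp : IsWLP a b n p) (y : ℝ) :
    (μ {ω | p (fun i => X i ω) ≤ y}).toReal =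
      1 - ∑ S ∈ (Finset.univ (α := Fin n)).powerset,
        (∑ T ∈ S.powerset, (-1 : ℝ) ^ (S.card - T.card) *
            (1 - (if p (charVec a b T) ≤ y then (1 : ℝ) else 0))) *
          ∏ i ∈ S, (1 - (μ {ω | X i ω ≤ y}).toReal) := by
  classical
  set E : Fin n → Set Ω := fun i => X i ⁻¹' Set.Ioi y
  have hE (i : Fin n) : MeasurableSet (E i) := hX i measurableSet_Ioi
  have hindE : iIndepSet E μ := (iIndepSet_iff_meas_biInter hE).2 fun S =>
    hind.meas_biInter fun i _ => ⟨Set.Ioi y, measurableSet_Ioi, rfl⟩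
  have hexceed : MeasurableSet {ω | y < p (fun i => X i ω)} :=
    (hp.measurable.comp (measurable_pi_lambda _ hX)) measurableSet_Ioi
  have hsurvival (i : Fin n) : 1 - (μ {ω | X i ω ≤ y}).toReal = μ.real (E i) := by
    have hcompl : {ω | X i ω ≤ y} = (E i)ᶜ := by ext; simp [E]
    rw [← measureReal_def, hcompl, probReal_compl_eq_one_sub (hE i), sub_sub_cancel]
  have hindicator (ω : Ω) : {ω | y < p (fun i => X i ω)}.indicator 1 ω =
      1 - (if p (charVec a b (univ.filter (ω ∈ E ·))) ≤ y then (1 : ℝ) else 0) := by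
    have hlevel := hp.lt_iff_lt_charVec (fun i => hrange i ω) (y := y)
      (S := univ.filter (ω ∈ E ·)) (by simp [E])
    simp only [Set.indicator_apply, Set.mem_ofPred_eq, Pi.one_apply, hlevel, ← not_lt]
    split_ifs <;> norm_num
  calc (μ {ω | p (fun i => X i ω) ≤ y}).toReal
      = 1 - μ.real {ω | y < p (fun i => X i ω)} := by
        rw [← probReal_compl_eq_one_sub hexceed, measureReal_def, Set.compl_ofPred]
        simp only [not_lt]
    _ = _ := by
        rw [← integral_indicator_one hexceed]
        simp only [hindicator, hsurvival]
        rw [integral_eq_sum_moebiusTransform_mul_prod hE hindE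
          fun T => 1 - if p (charVec a b T) ≤ y then 1 else 0]
        rfl

/-- C.d.f. of Y_p via the Möbius transform of v_{p,y}(S) = 1 − H_{p(e_S)}(y):
F_p(y) = 1 − Σ_S m_{v_{p,y}}(S) Π_{i∈S} [1 − F_i(y)]. -/
theorem cdf_wlp_moebius {Ω : Type*} [MeasurableSpace Ω] (μ : Measure Ω)
    [IsProbabilityMeasure μ] (a b : ℝ) (hab : a ≤ b) (n : ℕ)
    (X : Fin n → Ω → ℝ) (hX : ∀ i, Measurable (X i))
    (hrange : ∀ i ω, X i ω ∈ Set.Icc a b)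
    (hind : iIndepFun X μ)
    (p : (Fin n → ℝ) → ℝ) (hp : IsWLP a b n p) (y : ℝ) :
    (μ {ω | p (fun i => X i ω) ≤ y}).toReal =
      1 - ∑ S ∈ (Finset.univ (α := Fin n)).powerset,
        (∑ T ∈ S.powerset, (-1 : ℝ) ^ (S.card - T.card) *
            (1 - (if p (charVec a b T) ≤ y then (1 : ℝ) else 0))) *
          ∏ i ∈ S, (1 - (μ {ω | X i ω ≤ y}).toReal) :=
  cdf_wlp_moebius_general μ a b n X hX hrange hind p hp y
end

section
/- The expected value of the Sugeno integral of a uniform random vector on [0,1]^n equals ∫_{[0,1]^n} S_μ(x) dx = Σ_{S ⊆ [n]} Σ_{i=0}^{|S|} binom(|S|, i) (−1)^i μ(S)^{n−|S|+i+1} / (n − |S| + i + 1). -/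
/-!
Layer cake: the integral of `S_μ ∈ [0, 1]` over the cube is `∫₀¹ vol {S_μ ≥ t} dt`. For `t ≤ 1`,
monotonicity of `μ` gives `S_μ(x) ≥ t ↔ μ {i | t ≤ x i} ≥ t`, and the points of the cube with
`{i | t ≤ x i} = S` form the box `∏_{i ∈ S} [t, 1] × ∏_{i ∉ S} [0, t)` of volume
`(1 - t)^|S| t^(n - |S|)`. Hence `vol {S_μ ≥ t} = ∑_{μ(S) ≥ t} (1 - t)^|S| t^(n - |S|)`, and
integrating in `t` gives `∑_S ∫₀^{μ(S)} (1 - t)^|S| t^(n - |S|) dt`, which the binomial theorem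
turns into the stated sum.
-/

open Finset MeasureTheory

theorem integral_one_sub_pow_mul_pow (b : ℝ) (s k : ℕ) :
    ∫ t in 0..b, (1 - t) ^ s * t ^ k =
      ∑ i ∈ range (s + 1),
        (s.choose i : ℝ) * (-1) ^ i * b ^ (k + i + 1) / ((k + i + 1 : ℕ) : ℝ) := by
  have hexpand : ∀ t : ℝ, (1 - t) ^ s * t ^ k =
      ∑ i ∈ range (s + 1), (s.choose i : ℝ) * (-1) ^ i * t ^ (k + i) := fun t => by
    rw [sub_eq_neg_add, add_pow, sum_mul]
    refine sum_congr rfl fun i _ => ?_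
    rw [one_pow, neg_pow, pow_add]
    ring
  simp_rw [hexpand]
  rw [intervalIntegral.integral_finsetSum fun i _ =>
    (intervalIntegral.intervalIntegrable_pow _).const_mul _]
  refine sum_congr rfl fun i _ => ?_
  rw [intervalIntegral.integral_const_mul, integral_pow, zero_pow (Nat.succ_ne_zero _)]
  push_cast
  ring

theorem continuous_fold_min {ι : Type*} (S : Finset ι) (b : ℝ) :
    Continuous fun x : ι → ℝ => S.fold min b x := by
  classical
  induction S using Finset.induction_on with
  | empty => exact continuous_const
  | insert i S hi ih => simpa only [fold_insert hi] using (continuous_apply i).min ih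

section SugenoIntegral

variable {ι : Type*} [Fintype ι]

/-- `S.fold min 1 x` is the meet `⋀_{i ∈ S} x i` capped at `1`; on the unit cube this is the
meet of the Sugeno integral, the empty meet being `1`. -/
noncomputable def sugenoIntegral (m : Finset ι → ℝ) (x : ι → ℝ) : ℝ :=
  univ.powerset.sup' (powerset_nonempty _) fun S => min (m S) (S.fold min 1 x)

noncomputable def superlevelIndices (t : ℝ) (x : ι → ℝ) : Finset ι :=
  {i | t ≤ x i}

theorem continuous_sugenoIntegral (m : Finset ι → ℝ) : Continuous (sugenoIntegral m) :=
  Continuous.finset_sup'_apply _ fun S _ => continuous_const.min (continuous_fold_min S 1)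

theorem sugenoIntegral_nonneg {m : Finset ι → ℝ} (hm : 0 ≤ m ∅) (x : ι → ℝ) :
    0 ≤ sugenoIntegral m x :=
  le_sup'_of_le _ (empty_mem_powerset _) (by simpa using hm)

theorem sugenoIntegral_le_one (m : Finset ι → ℝ) (x : ι → ℝ) : sugenoIntegral m x ≤ 1 :=
  sup'_le _ _ fun _ _ => (min_le_right _ _).trans ((fold_min_le _).2 (Or.inl le_rfl))

theorem le_sugenoIntegral_iff {m : Finset ι → ℝ} (hm : Monotone m) {t : ℝ} (ht : t ≤ 1)
    (x : ι → ℝ) : t ≤ sugenoIntegral m x ↔ t ≤ m (superlevelIndices t x) := by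
  simp only [sugenoIntegral, le_sup'_iff, mem_powerset, subset_univ, true_and, le_min_iff,
    le_fold_min]
  constructor
  · rintro ⟨S, hS, -, hx⟩
    exact hS.trans (hm fun i hi => mem_filter.2 ⟨mem_univ i, hx i hi⟩)
  · intro h
    exact ⟨_, h, ht, fun i hi => (mem_filter.1 hi).2⟩

theorem setOf_le_sugenoIntegral_inter_unitCube {m : Finset ι → ℝ} (hm : Monotone m) {t : ℝ}
    (ht₁ : t ≤ 1) :
    {x : ι → ℝ | t ≤ sugenoIntegral m x} ∩ Set.Icc 0 1 =
      ⋃ S ∈ ({S | t ≤ m S} : Finset (Finset ι)),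
        Set.Icc 0 1 ∩ superlevelIndices t ⁻¹' {S} := by
  ext x
  simp only [Set.mem_inter_iff, Set.mem_ofPred_eq, le_sugenoIntegral_iff hm ht₁, Set.mem_iUnion,
    mem_filter, mem_univ, true_and, exists_prop, Set.mem_preimage, Set.mem_singleton_iff]
  constructor
  · rintro ⟨hx, hcube⟩
    exact ⟨_, hx, hcube, rfl⟩
  · rintro ⟨S, hS, hcube, rfl⟩
    exact ⟨hS, hcube⟩

variable [DecidableEq ι]

theorem unitCube_inter_superlevelIndices_preimage {t : ℝ} (ht₀ : 0 ≤ t) (ht₁ : t ≤ 1)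
    (S : Finset ι) :
    Set.Icc 0 1 ∩ superlevelIndices t ⁻¹' {S} =
      Set.univ.pi fun i => if i ∈ S then Set.Icc t 1 else Set.Ico 0 t := by
  ext x
  simp only [superlevelIndices, Set.mem_inter_iff, Set.mem_Icc, Pi.le_def, ← forall_and,
    Set.mem_preimage, Set.mem_singleton_iff, Finset.ext_iff, mem_filter, mem_univ, true_and,
    Set.mem_pi, Set.mem_univ, true_implies]
  refine forall_congr' fun i => ?_
  by_cases hi : i ∈ S
  · simp only [hi, iff_true, if_true, Set.mem_Icc, Pi.zero_apply, Pi.one_apply]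
    exact ⟨fun ⟨⟨_, h₁⟩, h⟩ => ⟨h, h₁⟩, fun ⟨h, h₁⟩ => ⟨⟨ht₀.trans h, h₁⟩, h⟩⟩
  · simp only [hi, iff_false, not_le, if_false, Set.mem_Ico, Pi.zero_apply, Pi.one_apply]
    exact ⟨fun ⟨⟨h₀, _⟩, h⟩ => ⟨h₀, h⟩, fun ⟨h₀, h⟩ => ⟨⟨h₀, h.le.trans ht₁⟩, h⟩⟩

theorem volume_real_unitCube_inter_superlevelIndices_preimage {t : ℝ} (ht₀ : 0 ≤ t)
    (ht₁ : t ≤ 1) (S : Finset ι) :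
    volume.real (Set.Icc 0 1 ∩ superlevelIndices t ⁻¹' {S}) =
      (1 - t) ^ #S * t ^ (Fintype.card ι - #S) := by
  have hside : ∀ i, volume.real (if i ∈ S then Set.Icc t 1 else Set.Ico 0 t) =
      if i ∈ S then 1 - t else t := fun i => by
    split_ifs
    exacts [Real.volume_real_Icc_of_le ht₁, by simpa using Real.volume_real_Ico_of_le ht₀]
  rw [unitCube_inter_superlevelIndices_preimage ht₀ ht₁, measureReal_def, volume_pi_pi,
    ENNReal.toReal_prod]
  simp only [← measureReal_def, hside]
  rw [prod_ite, filter_mem_eq_inter, univ_inter, filter_not, filter_mem_eq_inter, univ_inter,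
    prod_const, prod_const, ← compl_eq_univ_sdiff, card_compl]

theorem volume_real_le_sugenoIntegral_inter_unitCube {m : Finset ι → ℝ} (hm : Monotone m)
    {t : ℝ} (ht₀ : 0 ≤ t) (ht₁ : t ≤ 1) :
    volume.real ({x : ι → ℝ | t ≤ sugenoIntegral m x} ∩ Set.Icc 0 1) =
      ∑ S with t ≤ m S, (1 - t) ^ #S * t ^ (Fintype.card ι - #S) := by
  have hbox (S : Finset ι) : MeasurableSet (Set.Icc 0 1 ∩ superlevelIndices t ⁻¹' {S}) := by
    rw [unitCube_inter_superlevelIndices_preimage ht₀ ht₁]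
    exact MeasurableSet.univ_pi fun i => by split_ifs <;> measurability
  rw [setOf_le_sugenoIntegral_inter_unitCube hm ht₁,
    measureReal_biUnion_finset
      ((Set.pairwiseDisjoint_fiber _ _).mono fun _ => Set.inter_subset_right)
      (fun S _ => hbox S) fun _ _ =>
        measure_ne_top_of_subset Set.inter_subset_left isCompact_Icc.measure_lt_top.ne]
  exact sum_congr rfl fun S _ => volume_real_unitCube_inter_superlevelIndices_preimage ht₀ ht₁ S

theorem integral_sugenoIntegral_unitCube {m : Finset ι → ℝ} (hm : Monotone m)
    (hm₀₁ : ∀ S, m S ∈ Set.Icc 0 1) :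
    ∫ x in Set.Icc (0 : ι → ℝ) 1, sugenoIntegral m x =
      ∑ S, ∫ t in 0..m S, (1 - t) ^ #S * t ^ (Fintype.card ι - #S) := by
  have hint : IntegrableOn (sugenoIntegral m) (Set.Icc 0 1) :=
    (continuous_sugenoIntegral m).integrableOn_Icc
  rw [hint.integral_eq_integral_Ioc_meas_le (M := 1)
    (ae_of_all _ (sugenoIntegral_nonneg (hm₀₁ ∅).1)) (ae_of_all _ (sugenoIntegral_le_one m))]
  have hlevel : ∀ t ∈ Set.Ioc (0 : ℝ) 1,
      (volume.restrict (Set.Icc 0 1)).real {x | t ≤ sugenoIntegral m x} =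
        ∑ S, (Set.Ioc 0 (m S)).indicator
          (fun t => (1 - t) ^ #S * t ^ (Fintype.card ι - #S)) t := by
    rintro t ⟨ht₀, ht₁⟩
    rw [measureReal_restrict_apply' measurableSet_Icc,
      volume_real_le_sugenoIntegral_inter_unitCube hm ht₀.le ht₁, sum_filter]
    simp [Set.indicator_apply, ht₀]
  rw [setIntegral_congr_fun measurableSet_Ioc hlevel, integral_finsetSum _ fun S _ => ?_]
  · refine sum_congr rfl fun S _ => ?_
    rw [setIntegral_indicator measurableSet_Ioc, Set.Ioc_inter_Ioc, max_self,
      min_eq_right (hm₀₁ S).2, intervalIntegral.integral_of_le (hm₀₁ S).1]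
  · exact (Continuous.integrableOn_Ioc (by fun_prop)).indicator measurableSet_Ioc

end SugenoIntegral

theorem sugeno_integral_expected_value_general (n : ℕ) (m : Finset (Fin n) → ℝ)
    (hrange : ∀ S, m S ∈ Set.Icc (0 : ℝ) 1)
    (hmono : ∀ S T : Finset (Fin n), S ⊆ T → m S ≤ m T) :
    ∫ x in Set.Icc (0 : Fin n → ℝ) 1,
        (Finset.univ (α := Fin n)).powerset.sup' (Finset.powerset_nonempty _)
          (fun S => min (m S) (S.fold min 1 x)) =
      ∑ S ∈ (Finset.univ (α := Fin n)).powerset,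
        ∑ i ∈ Finset.range (S.card + 1),
          (S.card.choose i : ℝ) * (-1 : ℝ) ^ i *
            (m S) ^ (n - S.card + i + 1) / ((n - S.card + i + 1 : ℕ) : ℝ) := by
  have h := integral_sugenoIntegral_unitCube (fun S T => hmono S T) hrange
  rw [Fintype.card_fin, ← powerset_univ] at h
  exact h.trans (sum_congr rfl fun S _ => integral_one_sub_pow_mul_pow _ _ _)

/-- Expected value of the Sugeno integral with respect to a fuzzy measure μ of a
uniform random vector on [0,1]^n. -/
theorem sugeno_integral_expected_value (n : ℕ) (m : Finset (Fin n) → ℝ)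
    (hrange : ∀ S, m S ∈ Set.Icc (0 : ℝ) 1)
    (hmono : ∀ S T : Finset (Fin n), S ⊆ T → m S ≤ m T)
    (hbot : m ∅ = 0) (htop : m Finset.univ = 1) :
    ∫ x in Set.Icc (0 : Fin n → ℝ) 1,
        (Finset.univ (α := Fin n)).powerset.sup' (Finset.powerset_nonempty _)
          (fun S => min (m S) (S.fold min 1 x)) =
      ∑ S ∈ (Finset.univ (α := Fin n)).powerset,
        ∑ i ∈ Finset.range (S.card + 1),
          (S.card.choose i : ℝ) * (-1 : ℝ) ^ i *
            (m S) ^ (n - S.card + i + 1) / ((n - S.card + i + 1 : ℕ) : ℝ) :=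
  sugeno_integral_expected_value_general n m hrange hmono
end

section
/- (Mean time to failure, exponential model) If the component lifetimes X_i are independent with survival functions Pr[X_i > t] = e^{−λ_i t} (λ_i > 0) and the system lifetime is Y_p = p(X_1,...,X_n) for a weighted lattice polynomial p on L = [0,∞], then E[Y_p] = p(e_∅) + Σ_{∅ ≠ S ⊆ [n]} Σ_{T ⊆ S} (−1)^{|S|−|T|} (1 − e^{−λ(S) p(e_T)}) / λ(S), where λ(S) = Σ_{i∈S} λ_i. -/
open Finset MeasureTheory ProbabilityTheory ENNReal

/-- Weighted lattice polynomial functions on L = [0,∞] = ℝ≥0∞: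
built inductively from projections, constants, pointwise min and max. -/
inductive IsWLPE (n : ℕ) : ((Fin n → ℝ≥0∞) → ℝ≥0∞) → Prop
  | proj (k : Fin n) : IsWLPE n (fun x => x k)
  | const (c : ℝ≥0∞) : IsWLPE n (fun _ => c)
  | inf {p q} : IsWLPE n p → IsWLPE n q → IsWLPE n (fun x => min (p x) (q x))
  | sup {p q} : IsWLPE n p → IsWLPE n q → IsWLPE n (fun x => max (p x) (q x))

/-- The characteristic vector e_S of S ⊆ [n] in {0,∞}^n. -/
noncomputable def charVecE {n : ℕ} (S : Finset (Fin n)) : Fin n → ℝ≥0∞ := fun i => if i ∈ S then ⊤ else 0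

/-!
Since `p` is built from `min` and `max`, `s < p x` holds iff `s < p (e_K)` for
`K = {i | s < x i}`. Hence, by independence, the reliability `Pr[Y_p > t]` is the multilinear
extension of `T ↦ [t < p(e_T)]` evaluated at `(e^{-λ_i t})_i`, and Möbius inversion on the
Boolean lattice rewrites it as `Σ_S Σ_{T ⊆ S} (-1)^{|S|-|T|} [t < p(e_T)] e^{-λ(S) t}`.
The term `S = ∅` is `[t < p(e_∅)]`; the others sum to `Pr[p(e_∅) ≤ t < Y_p] ≥ 0` and are
integrable because `λ(S) > 0`. Integrating over `t > 0` (layer cake, `E[Y] = ∫ Pr[Y > t] dt`)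
gives `p(e_∅)` from the first part and the closed form from the rest.
-/

lemma setOf_ofReal_lt_inter_Ioi {y : ℝ≥0∞} (hy : y ≠ ⊤) :
    {t : ℝ | ENNReal.ofReal t < y} ∩ Set.Ioi 0 = Set.Ioo 0 y.toReal := by
  ext t
  simp only [Set.mem_inter_iff, Set.mem_Ioi, Set.mem_Ioo]
  constructor
  · rintro ⟨hty, ht⟩
    exact ⟨ht, (ENNReal.ofReal_lt_iff_lt_toReal ht.le hy).1 hty⟩
  · rintro ⟨ht, hty⟩
    exact ⟨(ENNReal.ofReal_lt_iff_lt_toReal ht.le hy).2 hty, ht⟩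

lemma measurableSet_setOf_ofReal_lt (y : ℝ≥0∞) : MeasurableSet {t : ℝ | ENNReal.ofReal t < y} :=
  ENNReal.measurable_ofReal measurableSet_Iio

lemma volume_setOf_ofReal_lt_inter_Ioi (y : ℝ≥0∞) :
    volume ({t : ℝ | ENNReal.ofReal t < y} ∩ Set.Ioi 0) = y := by
  rcases eq_or_ne y ⊤ with rfl | hy
  · simp
  · rw [setOf_ofReal_lt_inter_Ioi hy, Real.volume_Ioo, sub_zero, ENNReal.ofReal_toReal hy]

lemma lintegral_eq_lintegral_meas_ofReal_lt {Ω : Type*} [MeasurableSpace Ω] (μ : Measure Ω)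
    [SFinite μ] {f : Ω → ℝ≥0∞} (hf : Measurable f) :
    ∫⁻ ω, f ω ∂μ = ∫⁻ t in Set.Ioi 0, μ {ω | ENNReal.ofReal t < f ω} := by
  have hmeas : Measurable (Function.uncurry fun ω (t : ℝ) =>
      {t : ℝ | ENNReal.ofReal t < f ω}.indicator (1 : ℝ → ℝ≥0∞) t) :=
    measurable_one.indicator (s := {q : Ω × ℝ | ENNReal.ofReal q.2 < f q.1})
      (measurableSet_lt (ENNReal.measurable_ofReal.comp measurable_snd) (hf.comp measurable_fst))
  calc ∫⁻ ω, f ω ∂μ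
      = ∫⁻ ω, (∫⁻ t in Set.Ioi 0, {t : ℝ | ENNReal.ofReal t < f ω}.indicator 1 t) ∂μ := by
        simp_rw [lintegral_indicator_one (measurableSet_setOf_ofReal_lt _),
          Measure.restrict_apply (measurableSet_setOf_ofReal_lt _),
          volume_setOf_ofReal_lt_inter_Ioi]
    _ = ∫⁻ t in Set.Ioi 0, ∫⁻ ω, {ω | ENNReal.ofReal t < f ω}.indicator 1 ω ∂μ :=
        lintegral_lintegral_swap hmeas.aemeasurable
    _ = ∫⁻ t in Set.Ioi 0, μ {ω | ENNReal.ofReal t < f ω} := by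
        simp_rw [lintegral_indicator_one (measurableSet_lt measurable_const hf)]

lemma integral_Ioi_indicator_ofReal_lt_exp {a : ℝ} (ha : 0 < a) (d : ℝ≥0∞) :
    ∫ t in Set.Ioi 0, {t : ℝ | ENNReal.ofReal t < d}.indicator (fun t => Real.exp (-a * t)) t =
      (if d = ⊤ then 1 else 1 - Real.exp (-a * d.toReal)) / a := by
  have hIoi : ∀ c : ℝ, ∫ t in Set.Ioi c, Real.exp (-a * t) = Real.exp (-a * c) / a := fun c => by
    rw [integral_exp_mul_Ioi (neg_neg_of_pos ha), div_neg, neg_div, neg_neg]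
  rw [integral_indicator (measurableSet_setOf_ofReal_lt d),
    Measure.restrict_restrict (measurableSet_setOf_ofReal_lt d)]
  rcases eq_or_ne d ⊤ with rfl | hd
  · simp only [ENNReal.ofReal_lt_top, Set.ofPred_true, Set.univ_inter, if_true, hIoi, mul_zero,
      Real.exp_zero]
  · rw [setOf_ofReal_lt_inter_Ioi hd, if_neg hd, ← integral_Ioc_eq_integral_Ioo,
      ← intervalIntegral.integral_of_le ENNReal.toReal_nonneg,
      ← intervalIntegral.integral_Ioi_sub_Ioi (exp_neg_integrableOn_Ioi 0 ha)
        ENNReal.toReal_nonneg, hIoi, hIoi, mul_zero, Real.exp_zero, sub_div]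

lemma integrableOn_Ioi_indicator_ofReal_lt_exp {a : ℝ} (ha : 0 < a) (d : ℝ≥0∞) :
    IntegrableOn ({t : ℝ | ENNReal.ofReal t < d}.indicator fun t => Real.exp (-a * t))
      (Set.Ioi 0) :=
  (exp_neg_integrableOn_Ioi 0 ha).indicator (measurableSet_setOf_ofReal_lt d)

section MultilinearExtension

variable {ι R : Type*} [Fintype ι] [DecidableEq ι] [CommRing R]

/-- The multilinear extension `Φ_v` of a set function `v`. -/
def multilinearExt (v : Finset ι → R) (x : ι → R) : R :=
  ∑ T ∈ univ.powerset, v T * ((∏ i ∈ T, x i) * ∏ i ∈ univ \ T, (1 - x i))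

lemma prod_mul_prod_sdiff_one_sub (x : ι → R) (T : Finset ι) :
    (∏ i ∈ T, x i) * ∏ i ∈ univ \ T, (1 - x i) =
      ∑ S ∈ univ.powerset with T ⊆ S, (-1) ^ (#S - #T) * ∏ i ∈ S, x i := by
  rw [prod_sub, mul_sum]
  refine sum_nbij' (T ∪ ·) (· \ T) (fun U _ => by simp) (fun S _ => by simp) ?_ ?_ ?_
  · intro U hU
    exact union_sdiff_cancel_left (subset_sdiff.1 (mem_powerset.1 hU)).2.symm
  · intro S hS
    exact union_sdiff_of_subset (mem_filter.1 hS).2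
  · intro U hU
    have hTU : Disjoint T U := (subset_sdiff.1 (mem_powerset.1 hU)).2.symm
    rw [card_union_of_disjoint hTU, Nat.add_sub_cancel_left, prod_union hTU, prod_const_one,
      mul_one]
    ring

lemma multilinearExt_eq_sum_powerset (v : Finset ι → R) (x : ι → R) :
    multilinearExt v x =
      ∑ S ∈ univ.powerset, ∑ T ∈ S.powerset, (-1) ^ (#S - #T) * v T * ∏ i ∈ S, x i := by
  simp_rw [multilinearExt, prod_mul_prod_sdiff_one_sub, mul_sum]
  rw [sum_comm' (t' := univ.powerset) (s' := powerset) fun T S => by simp]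
  exact sum_congr rfl fun S _ => sum_congr rfl fun T _ => by ring

end MultilinearExtension

section Independence

variable {ι Ω β : Type*} [Fintype ι] [DecidableEq ι]

lemma setOf_filter_mem_eq_iInter (X : ι → Ω → β) (A : Set β) [DecidablePred (· ∈ A)]
    (T : Finset ι) :
    {ω | univ.filter (fun i => X i ω ∈ A) = T} =
      ⋂ i, if i ∈ T then X i ⁻¹' A else (X i ⁻¹' A)ᶜ := by
  ext ω
  simp only [Set.mem_ofPred_eq, Finset.ext_iff, mem_filter, mem_univ, true_and, Set.mem_iInter]
  refine forall_congr' fun i => ?_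
  by_cases hi : i ∈ T <;> simp [hi]

variable [MeasurableSpace Ω] [MeasurableSpace β]

lemma measurableSet_setOf_filter_mem_eq {X : ι → Ω → β} (hX : ∀ i, Measurable (X i))
    {A : Set β} (hA : MeasurableSet A) [DecidablePred (· ∈ A)] (T : Finset ι) :
    MeasurableSet {ω | univ.filter (fun i => X i ω ∈ A) = T} := by
  rw [setOf_filter_mem_eq_iInter]
  refine .iInter fun i => ?_
  split_ifs
  exacts [hX i hA, (hX i hA).compl]

lemma ProbabilityTheory.iIndepFun.measureReal_setOf_filter_mem_eq {μ : Measure Ω}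
    [IsProbabilityMeasure μ] {X : ι → Ω → β} (hind : iIndepFun X μ) (hX : ∀ i, Measurable (X i))
    {A : Set β} (hA : MeasurableSet A) [DecidablePred (· ∈ A)] (T : Finset ι) :
    μ.real {ω | univ.filter (fun i => X i ω ∈ A) = T} =
      (∏ i ∈ T, μ.real (X i ⁻¹' A)) * ∏ i ∈ univ \ T, (1 - μ.real (X i ⁻¹' A)) := by
  have hindep : μ (⋂ i, if i ∈ T then X i ⁻¹' A else (X i ⁻¹' A)ᶜ) =
      ∏ i, μ (if i ∈ T then X i ⁻¹' A else (X i ⁻¹' A)ᶜ) := by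
    refine hind.meas_iInter fun i => ?_
    have hXA : MeasurableSet[.comap (X i) ‹_›] (X i ⁻¹' A) := ⟨A, hA, rfl⟩
    split_ifs
    exacts [hXA, hXA.compl]
  rw [setOf_filter_mem_eq_iInter, measureReal_def, hindep, ENNReal.toReal_prod]
  simp_rw [apply_ite μ, apply_ite ENNReal.toReal, ← measureReal_def,
    probReal_compl_eq_one_sub (hX _ hA)]
  rw [prod_ite, filter_mem_eq_inter, univ_inter, ← sdiff_eq_filter]

end Independence

namespace IsWLPE

variable {n : ℕ} {p : (Fin n → ℝ≥0∞) → ℝ≥0∞}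

lemma monotone (hp : IsWLPE n p) : Monotone p := by
  induction hp with
  | proj k => exact fun x y h => h k
  | const c => exact monotone_const
  | inf _ _ h₁ h₂ => exact h₁.min h₂
  | sup _ _ h₁ h₂ => exact h₁.max h₂

lemma measurable (hp : IsWLPE n p) : Measurable p := by
  induction hp with
  | proj k => exact measurable_pi_apply k
  | const c => exact measurable_const
  | inf _ _ h₁ h₂ => exact h₁.min h₂
  | sup _ _ h₁ h₂ => exact h₁.max h₂

lemma charVecE_empty_le (hp : IsWLPE n p) (x : Fin n → ℝ≥0∞) : p (charVecE ∅) ≤ p x :=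
  hp.monotone fun i => by simp [charVecE]

lemma lt_iff_lt_charVecE (hp : IsWLPE n p) (x : Fin n → ℝ≥0∞) (s : ℝ≥0∞) :
    s < p x ↔ s < p (charVecE (univ.filter fun i => s < x i)) := by
  induction hp with
  | proj k =>
    by_cases h : s < x k
    · simp [charVecE, h, h.trans_le le_top]
    · simp [charVecE, h]
  | const c => exact Iff.rfl
  | inf _ _ h₁ h₂ => simp only [lt_min_iff, h₁, h₂]
  | sup _ _ h₁ h₂ => simp only [lt_max_iff, h₁, h₂]

end IsWLPE

section Exponential

variable {ι : Type*} [Fintype ι] [DecidableEq ι]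

/-- `R_p(t) - 1[t < p(e_∅)]` in the exponential model, as the Möbius sum over `S ≠ ∅`;
here `c T` stands for `p(e_T)` and `l` for the failure rates. -/
noncomputable def reliabilityExcess (c : Finset ι → ℝ≥0∞) (l : ι → ℝ) (t : ℝ) : ℝ :=
  ∑ S ∈ univ.powerset.filter (fun S => S ≠ ∅), ∑ T ∈ S.powerset, (-1 : ℝ) ^ (#S - #T) *
    {t : ℝ | ENNReal.ofReal t < c T}.indicator (fun t => Real.exp (-(∑ i ∈ S, l i) * t)) t

lemma integrableOn_reliabilityExcess (c : Finset ι → ℝ≥0∞) {l : ι → ℝ} (hl : ∀ i, 0 < l i) :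
    IntegrableOn (reliabilityExcess c l) (Set.Ioi 0) :=
  integrable_finsetSum _ fun _ hS => integrable_finsetSum _ fun _ _ =>
    (integrableOn_Ioi_indicator_ofReal_lt_exp
      (sum_pos (fun i _ => hl i) (nonempty_iff_ne_empty.2 (mem_filter.1 hS).2)) _).const_mul _

lemma integral_reliabilityExcess (c : Finset ι → ℝ≥0∞) {l : ι → ℝ} (hl : ∀ i, 0 < l i) :
    ∫ t in Set.Ioi 0, reliabilityExcess c l t =
      ∑ S ∈ univ.powerset.filter (fun S => S ≠ ∅), ∑ T ∈ S.powerset, (-1 : ℝ) ^ (#S - #T) *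
        ((if c T = ⊤ then 1 else 1 - Real.exp (-(∑ i ∈ S, l i) * (c T).toReal)) /
          (∑ i ∈ S, l i)) := by
  have hrate : ∀ S ∈ univ.powerset.filter (fun S => S ≠ ∅), 0 < ∑ i ∈ S, l i := fun S hS =>
    sum_pos (fun i _ => hl i) (nonempty_iff_ne_empty.2 (mem_filter.1 hS).2)
  have hterm : ∀ S ∈ univ.powerset.filter (fun S => S ≠ ∅), ∀ T : Finset ι,
      IntegrableOn (fun t => (-1 : ℝ) ^ (#S - #T) *
        {t : ℝ | ENNReal.ofReal t < c T}.indicator (fun t => Real.exp (-(∑ i ∈ S, l i) * t)) t)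
        (Set.Ioi 0) := fun S hS T =>
    (integrableOn_Ioi_indicator_ofReal_lt_exp (hrate S hS) _).const_mul _
  unfold reliabilityExcess
  rw [integral_finsetSum _ fun S hS =>
    integrable_finsetSum _ fun T _ => hterm S hS T]
  refine sum_congr rfl fun S hS => ?_
  rw [integral_finsetSum _ fun T _ => hterm S hS T]
  refine sum_congr rfl fun T _ => ?_
  rw [integral_const_mul, integral_Ioi_indicator_ofReal_lt_exp (hrate S hS)]

end Exponential

section Reliability

variable {Ω : Type*} [MeasurableSpace Ω] {μ : Measure Ω} [IsProbabilityMeasure μ] {n : ℕ}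
  {X : Fin n → Ω → ℝ≥0∞} {p : (Fin n → ℝ≥0∞) → ℝ≥0∞} {l : Fin n → ℝ}

lemma IsWLPE.measureReal_lt_eq_multilinearExt (hind : iIndepFun X μ)
    (hX : ∀ i, Measurable (X i)) (hp : IsWLPE n p) (s : ℝ≥0∞) :
    μ.real {ω | s < p fun i => X i ω} =
      multilinearExt (fun T => if s < p (charVecE T) then 1 else 0)
        (fun i => μ.real {ω | s < X i ω}) := by
  set K : Ω → Finset (Fin n) := fun ω => univ.filter fun i => X i ω ∈ Set.Ioi s
  have hY : {ω | s < p fun i => X i ω} =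
      K ⁻¹' ↑(univ.powerset.filter fun T => s < p (charVecE T)) := by
    ext ω
    simp [K, hp.lt_iff_lt_charVecE (fun i => X i ω) s]
  rw [hY, ← sum_measureReal_preimage_singleton (f := K) _
    fun T _ => measurableSet_setOf_filter_mem_eq hX measurableSet_Ioi T, multilinearExt, sum_filter]
  refine sum_congr rfl fun T _ => ?_
  split_ifs
  · rw [one_mul]
    exact hind.measureReal_setOf_filter_mem_eq hX measurableSet_Ioi T
  · rw [zero_mul]

lemma IsWLPE.measureReal_lt_eq_indicator_add_reliabilityExcess (hind : iIndepFun X μ)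
    (hX : ∀ i, Measurable (X i)) (hp : IsWLPE n p) {t : ℝ}
    (hexp : ∀ i, μ.real {ω | ENNReal.ofReal t < X i ω} = Real.exp (-(l i) * t)) :
    μ.real {ω | ENNReal.ofReal t < p fun i => X i ω} =
      {t : ℝ | ENNReal.ofReal t < p (charVecE ∅)}.indicator 1 t +
        reliabilityExcess (fun T => p (charVecE T)) l t := by
  have hprod : ∀ S : Finset (Fin n), ∏ i ∈ S, Real.exp (-(l i) * t) =
      Real.exp (-(∑ i ∈ S, l i) * t) := fun S => by
    rw [← Real.exp_sum, neg_mul, sum_mul, ← sum_neg_distrib]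
    simp only [neg_mul]
  rw [hp.measureReal_lt_eq_multilinearExt hind hX, funext hexp, multilinearExt_eq_sum_powerset,
    ← add_sum_erase _ _ (empty_mem_powerset univ), ← filter_ne', reliabilityExcess]
  congr 1
  · simp only [powerset_empty, sum_singleton, card_empty, Nat.sub_self, pow_zero, one_mul,
      prod_empty, mul_one]
    by_cases h : ENNReal.ofReal t < p (charVecE ∅) <;> simp [h]
  · refine sum_congr rfl fun S _ => sum_congr rfl fun T _ => ?_
    rw [hprod]
    by_cases h : ENNReal.ofReal t < p (charVecE T) <;> simp [h]

lemma IsWLPE.reliabilityExcess_nonneg (hind : iIndepFun X μ) (hX : ∀ i, Measurable (X i))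
    (hp : IsWLPE n p) {t : ℝ}
    (hexp : ∀ i, μ.real {ω | ENNReal.ofReal t < X i ω} = Real.exp (-(l i) * t)) :
    0 ≤ reliabilityExcess (fun T => p (charVecE T)) l t := by
  have hR := hp.measureReal_lt_eq_indicator_add_reliabilityExcess hind hX hexp
  by_cases ht : ENNReal.ofReal t < p (charVecE ∅)
  · have hsure : {ω | ENNReal.ofReal t < p fun i => X i ω} = Set.univ :=
      Set.eq_univ_of_forall fun ω => ht.trans_le (hp.charVecE_empty_le _)
    simp only [hsure, probReal_univ, Set.indicator_apply, Set.mem_ofPred_eq, ht, if_true,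
      Pi.one_apply] at hR
    linarith
  · simp only [Set.indicator_apply, Set.mem_ofPred_eq, ht, if_false] at hR
    linarith [measureReal_nonneg (μ := μ) (s := {ω | ENNReal.ofReal t < p fun i => X i ω})]

lemma IsWLPE.measure_lt_eq_indicator_add_reliabilityExcess (hind : iIndepFun X μ)
    (hX : ∀ i, Measurable (X i)) (hp : IsWLPE n p) {t : ℝ}
    (hexp : ∀ i, μ.real {ω | ENNReal.ofReal t < X i ω} = Real.exp (-(l i) * t)) :
    μ {ω | ENNReal.ofReal t < p fun i => X i ω} =
      {t : ℝ | ENNReal.ofReal t < p (charVecE ∅)}.indicator 1 t +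
        ENNReal.ofReal (reliabilityExcess (fun T => p (charVecE T)) l t) := by
  rw [← ofReal_measureReal, hp.measureReal_lt_eq_indicator_add_reliabilityExcess hind hX hexp,
    ENNReal.ofReal_add (Set.indicator_nonneg (f := 1) (fun _ _ => zero_le_one) t)
      (hp.reliabilityExcess_nonneg hind hX hexp)]
  by_cases ht : ENNReal.ofReal t < p (charVecE ∅) <;> simp [ht]

end Reliability

/-- Mean time to failure of a coherent system under the exponential reliability
model: E[Y_p] = p(e_∅) + Σ_{∅≠S⊆[n]} Σ_{T⊆S} (−1)^{|S|−|T|} (1 − e^{−λ(S) p(e_T)})/λ(S),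
where λ(S) = Σ_{i∈S} λ_i and, for p(e_T) = ∞, e^{−λ(S)·∞} is interpreted as 0. -/
theorem mean_time_to_failure_exponential {Ω : Type*} [MeasurableSpace Ω]
    (μ : Measure Ω) [IsProbabilityMeasure μ] (n : ℕ)
    (X : Fin n → Ω → ℝ≥0∞) (hX : ∀ i, Measurable (X i))
    (hind : iIndepFun X μ)
    (l : Fin n → ℝ) (hl : ∀ i, 0 < l i)
    (hexp : ∀ i, ∀ t : ℝ, 0 ≤ t →
      (μ {ω | ENNReal.ofReal t < X i ω}).toReal = Real.exp (-(l i) * t))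
    (p : (Fin n → ℝ≥0∞) → ℝ≥0∞) (hp : IsWLPE n p) :
    ∫⁻ ω, p (fun i => X i ω) ∂μ =
      p (charVecE (∅ : Finset (Fin n))) + ENNReal.ofReal
        (∑ S ∈ ((Finset.univ (α := Fin n)).powerset.filter (fun S => S ≠ ∅)),
          ∑ T ∈ S.powerset, (-1 : ℝ) ^ (S.card - T.card) *
            ((if p (charVecE T) = ⊤ then 1
              else 1 - Real.exp (-(∑ i ∈ S, l i) * (p (charVecE T)).toReal)) /
              (∑ i ∈ S, l i))) := by
  have hsurvival : ∀ t ∈ Set.Ioi (0 : ℝ), ∀ i,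
      μ.real {ω | ENNReal.ofReal t < X i ω} = Real.exp (-(l i) * t) :=
    fun t ht i => hexp i t (le_of_lt ht)
  have hmeas := measurableSet_setOf_ofReal_lt (p (charVecE ∅))
  calc ∫⁻ ω, p (fun i => X i ω) ∂μ
      = ∫⁻ t in Set.Ioi 0, μ {ω | ENNReal.ofReal t < p fun i => X i ω} :=
        lintegral_eq_lintegral_meas_ofReal_lt μ (hp.measurable.comp (measurable_pi_lambda _ hX))
    _ = ∫⁻ t in Set.Ioi 0, ({t : ℝ | ENNReal.ofReal t < p (charVecE ∅)}.indicator 1 t +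
          ENNReal.ofReal (reliabilityExcess (fun T => p (charVecE T)) l t)) :=
        setLIntegral_congr_fun measurableSet_Ioi fun t ht =>
          hp.measure_lt_eq_indicator_add_reliabilityExcess hind hX (hsurvival t ht)
    _ = p (charVecE ∅) +
          ENNReal.ofReal (∫ t in Set.Ioi 0, reliabilityExcess (fun T => p (charVecE T)) l t) := by
        rw [lintegral_add_left (measurable_one.indicator hmeas), lintegral_indicator_one hmeas,
          Measure.restrict_apply hmeas, volume_setOf_ofReal_lt_inter_Ioi,
          ofReal_integral_eq_lintegral_ofReal (integrableOn_reliabilityExcess _ hl)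
            (ae_restrict_of_forall_mem measurableSet_Ioi fun t ht =>
              hp.reliabilityExcess_nonneg hind hX (hsurvival t ht))]
    _ = _ := by rw [integral_reliabilityExcess _ hl]
end
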